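/- arXiv:2401.09184 — 3 statements merged into one kernel-verified Lean document; each statement's English description precedes it below -/
import Mathlib

section
/- Let Θ ⊆ ℝ^d be a bounded measurable set with positive finite Lebesgue measure, let F : Θ → S^d_+(ℝ) be a measurable field of symmetric positive semidefinite matrices whose eigenvalues are all at most μ for some μ > 0, and let r̂ = max_{θ∈Θ} rank F(θ). Then for all ζ ∈ [0,1) and 0 < ε < 1, the two-scale effective dimension satisfies d_ζ(ε) ≤ ζ d + r̂ ( 1 − ζ + log(1 + μ^{1/2}) / |log ε| ). -/
/-!
Diagonalising `Fsqrt θ` gives `det (1 + c • Fsqrt θ) = ∏ i, (1 + c λᵢ)` with `c = ε ^ (ζ - 1) ≥ 1`,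
where the eigenvalues `λᵢ` lie in `[0, √μ]` (their squares are eigenvalues of `F θ`) and at most
`r̂ ≥ rank F θ` of them are nonzero. Hence the determinant lies in `[0, (1 + c √μ) ^ r̂]`, so its
average over `Θ` is at most `(1 + c √μ) ^ r̂` in absolute value, and
`log (1 + c √μ) ≤ log c + log (1 + √μ) = (1 - ζ) |log ε| + log (1 + √μ)`.
-/

open MeasureTheory Matrix

namespace Matrix

variable {n : Type*} [Fintype n] [DecidableEq n]

theorem IsHermitian.det_cfc {𝕜 : Type*} [RCLike 𝕜] {A : Matrix n n 𝕜} (hA : A.IsHermitian)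
    (f : ℝ → ℝ) : (cfc f A).det = ∏ i, (f (hA.eigenvalues i) : 𝕜) := by
  rw [hA.cfc_eq, IsHermitian.cfc]
  simp [-Unitary.conjStarAlgAut_apply]

theorem IsHermitian.det_one_add_smul {𝕜 : Type*} [RCLike 𝕜] {A : Matrix n n 𝕜}
    (hA : A.IsHermitian) (c : ℝ) :
    (1 + c • A).det = ∏ i, ((1 + c * hA.eigenvalues i : ℝ) : 𝕜) := by
  rw [← hA.det_cfc (fun x => 1 + c * x), cfc_add .., cfc_const_one .., cfc_const_mul_id ..]

theorem IsHermitian.eigenvalues_sq_le {B : Matrix n n ℝ} (hB : B.IsHermitian) {μ : ℝ}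
    (h : ∀ v, v ⬝ᵥ (B * B) *ᵥ v ≤ μ * (v ⬝ᵥ v)) (i : n) : hB.eigenvalues i ^ 2 ≤ μ := by
  set v : n → ℝ := ⇑(hB.eigenvectorBasis i)
  have hv : v ⬝ᵥ v = 1 := by
    have h := real_inner_self_eq_norm_sq (hB.eigenvectorBasis i)
    rwa [hB.eigenvectorBasis.orthonormal.1 i, EuclideanSpace.inner_eq_star_dotProduct,
      one_pow] at h
  have hBBv : (B * B) *ᵥ v = hB.eigenvalues i ^ 2 • v := by
    rw [← mulVec_mulVec, hB.mulVec_eigenvectorBasis, mulVec_smul, hB.mulVec_eigenvectorBasis,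
      smul_smul, sq]
  simpa [hBBv, hv] using h v

theorem PosSemidef.det_one_add_smul_le {A : Matrix n n ℝ} (hA : A.PosSemidef) {c s : ℝ}
    (hc : 0 ≤ c) (hs : 0 ≤ s) (hA_le : ∀ i, hA.1.eigenvalues i ≤ s) {r : ℕ} (hr : A.rank ≤ r) :
    (1 + c • A).det ≤ (1 + c * s) ^ r := by
  classical
  have hfactor : ∀ i, 1 ≤ 1 + c * hA.1.eigenvalues i := fun i =>
    le_add_of_nonneg_right (mul_nonneg hc (hA.eigenvalues_nonneg i))
  calc (1 + c • A).det
      = ∏ i with hA.1.eigenvalues i ≠ 0, (1 + c * hA.1.eigenvalues i) := by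
        rw [hA.1.det_one_add_smul, Finset.prod_filter_of_ne]
        · rfl
        · intro i _ h hi
          simp [hi] at h
    _ ≤ ∏ i with hA.1.eigenvalues i ≠ 0, (1 + c * s) :=
        Finset.prod_le_prod (fun i _ => zero_le_one.trans (hfactor i))
          fun i _ => by gcongr; exact hA_le i
    _ = (1 + c * s) ^ Fintype.card {i // hA.1.eigenvalues i ≠ 0} := by
        rw [Finset.prod_const, Fintype.card_subtype]
    _ ≤ (1 + c * s) ^ r := by
        gcongr
        · exact le_add_of_nonneg_right (mul_nonneg hc hs)
        · exact hA.1.rank_eq_card_non_zero_eigs ▸ hr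

theorem PosSemidef.abs_det_one_add_smul_le {B : Matrix n n ℝ} (hB : B.PosSemidef) {c μ : ℝ}
    (hc : 0 ≤ c) (hBB : ∀ v, v ⬝ᵥ (B * B) *ᵥ v ≤ μ * (v ⬝ᵥ v)) {r : ℕ} (hr : (B * B).rank ≤ r) :
    |(1 + c • B).det| ≤ (1 + c * √μ) ^ r := by
  have hdet_nonneg : 0 ≤ (1 + c • B).det := (PosSemidef.one.add (hB.smul hc)).det_nonneg
  rw [abs_of_nonneg hdet_nonneg]
  refine hB.det_one_add_smul_le hc (Real.sqrt_nonneg μ)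
    (fun i => Real.le_sqrt_of_sq_le (hB.1.eigenvalues_sq_le hBB i)) ?_
  rwa [← B.rank_conjTranspose_mul_self, hB.1.eq]

end Matrix

theorem MeasureTheory.abs_inv_measure_mul_setIntegral_le {α : Type*} [MeasurableSpace α]
    {μ : Measure α} {s : Set α} (hs : μ s ≠ ⊤) {f : α → ℝ} {C : ℝ} (hC : 0 ≤ C)
    (hf : ∀ x ∈ s, |f x| ≤ C) : |(μ s).toReal⁻¹ * ∫ x in s, f x ∂μ| ≤ C := by
  rw [abs_mul, abs_inv, ENNReal.abs_toReal]
  rcases eq_or_ne (μ s).toReal 0 with h0 | h0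
  · simpa [h0] using hC
  calc (μ s).toReal⁻¹ * |∫ x in s, f x ∂μ| ≤ (μ s).toReal⁻¹ * (C * μ.real s) := by
        gcongr; exact norm_setIntegral_le_of_norm_le_const (f := f) hs.lt_top hf
    _ = C := by rw [measureReal_def]; field_simp

theorem Real.log_le_log_of_abs_le {x C : ℝ} (hC : 1 ≤ C) (hx : |x| ≤ C) : log x ≤ log C := by
  rw [← log_abs]
  rcases eq_or_ne |x| 0 with h0 | h0
  · rw [h0, log_zero]; exact log_nonneg hC
  · exact log_le_log (abs_pos.mpr (abs_ne_zero.mp h0)) hx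

theorem Real.log_one_add_mul_le {c a : ℝ} (hc : 1 ≤ c) (ha : 0 ≤ a) :
    log (1 + c * a) ≤ log c + log (1 + a) := by
  rw [← log_mul (by positivity) (by positivity)]
  exact log_le_log (by positivity) (by nlinarith)

theorem twoScaleEffectiveDimension_le_general
    {d : ℕ} (Θ : Set (Fin d → ℝ))
    (hfin : volume Θ ≠ ⊤)
    (F Fsqrt : (Fin d → ℝ) → Matrix (Fin d) (Fin d) ℝ)
    (hsqrt : ∀ θ ∈ Θ, (Fsqrt θ).PosSemidef ∧ Fsqrt θ * Fsqrt θ = F θ)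
    (μ : ℝ)
    (hev : ∀ θ ∈ Θ, ∀ v : Fin d → ℝ, v ⬝ᵥ (F θ).mulVec v ≤ μ * (v ⬝ᵥ v))
    (rhat : ℕ)
    (hmax : ∀ θ ∈ Θ, (F θ).rank ≤ rhat)
    (ζ ε : ℝ) (hζ1 : ζ < 1) (hε0 : 0 < ε) (hε1 : ε < 1) :
    ζ * d + Real.log ((volume Θ).toReal⁻¹ *
        ∫ θ in Θ, ((1 : Matrix (Fin d) (Fin d) ℝ) + ε ^ (ζ - 1) • Fsqrt θ).det) / |Real.log ε|
      ≤ ζ * d + rhat * (1 - ζ + Real.log (1 + Real.sqrt μ) / |Real.log ε|) := by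
  set c := ε ^ (ζ - 1)
  have hc : 1 ≤ c := Real.one_le_rpow_of_pos_of_le_one_of_nonpos hε0 hε1.le (by linarith)
  have hlog_ε : 0 < |Real.log ε| := abs_pos.mpr (Real.log_neg hε0 hε1).ne
  have hlog_c : Real.log c = (1 - ζ) * |Real.log ε| := by
    rw [Real.log_rpow hε0, abs_of_neg (Real.log_neg hε0 hε1)]; ring
  have hdet : ∀ θ ∈ Θ, |(1 + c • Fsqrt θ).det| ≤ (1 + c * √μ) ^ rhat := fun θ hθ => by
    obtain ⟨hpsd, hmul⟩ := hsqrt θ hθ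
    exact hpsd.abs_det_one_add_smul_le (by positivity) (hmul ▸ hev θ hθ) (hmul ▸ hmax θ hθ)
  rw [add_le_add_iff_left, div_le_iff₀ hlog_ε]
  calc Real.log ((volume Θ).toReal⁻¹ * ∫ θ in Θ, (1 + c • Fsqrt θ).det)
      ≤ Real.log ((1 + c * √μ) ^ rhat) :=
        Real.log_le_log_of_abs_le (one_le_pow₀ (le_add_of_nonneg_right (by positivity)))
          (abs_inv_measure_mul_setIntegral_le hfin (by positivity) hdet)
    _ = rhat * Real.log (1 + c * √μ) := Real.log_pow _ _
    _ ≤ rhat * ((1 - ζ) * |Real.log ε| + Real.log (1 + √μ)) := by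
        gcongr
        exact hlog_c ▸ Real.log_one_add_mul_le hc (Real.sqrt_nonneg μ)
    _ = rhat * (1 - ζ + Real.log (1 + √μ) / |Real.log ε|) * |Real.log ε| := by
        field_simp

/-- **upper bound on the two-scale effective dimension.**
Let `Θ ⊆ ℝ^d` be a bounded measurable set with positive finite Lebesgue measure, let
`F : Θ → S^d_+(ℝ)` be a measurable field of symmetric positive semidefinite matrices whose
eigenvalues are all at most `μ > 0` (equivalently `⟨F(θ)v, v⟩ ≤ μ |v|²` for all `v`), and let
`r̂ = max_{θ∈Θ} rank F(θ)`.  Then for all `ζ ∈ [0,1)` and `0 < ε < 1`,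
`d_ζ(ε) ≤ ζ d + r̂ (1 − ζ + log(1 + μ^{1/2}) / |log ε|)`, where
`d_ζ(ε) = ζ d + log( ⨍_Θ det(I_d + ε^{ζ−1} F(θ)^{1/2}) dθ ) / |log ε|`. -/
theorem twoScaleEffectiveDimension_le
    {d : ℕ} (Θ : Set (Fin d → ℝ)) (hmeasΘ : MeasurableSet Θ)
    (hbdd : Bornology.IsBounded Θ) (hpos : 0 < volume Θ) (hfin : volume Θ ≠ ⊤)
    (F Fsqrt : (Fin d → ℝ) → Matrix (Fin d) (Fin d) ℝ)
    (hFmeas : ∀ i j, Measurable fun θ => F θ i j)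
    (hFsqrtmeas : ∀ i j, Measurable fun θ => Fsqrt θ i j)
    (hpsd : ∀ θ ∈ Θ, (F θ).PosSemidef)
    (hsqrt : ∀ θ ∈ Θ, (Fsqrt θ).PosSemidef ∧ Fsqrt θ * Fsqrt θ = F θ)
    (μ : ℝ) (hμ : 0 < μ)
    (hev : ∀ θ ∈ Θ, ∀ v : Fin d → ℝ, v ⬝ᵥ (F θ).mulVec v ≤ μ * (v ⬝ᵥ v))
    (rhat : ℕ)
    (hattain : ∃ θ₀ ∈ Θ, (F θ₀).rank = rhat)
    (hmax : ∀ θ ∈ Θ, (F θ).rank ≤ rhat)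
    (ζ ε : ℝ) (hζ0 : 0 ≤ ζ) (hζ1 : ζ < 1) (hε0 : 0 < ε) (hε1 : ε < 1) :
    ζ * d + Real.log ((volume Θ).toReal⁻¹ *
        ∫ θ in Θ, ((1 : Matrix (Fin d) (Fin d) ℝ) + ε ^ (ζ - 1) • Fsqrt θ).det) / |Real.log ε|
      ≤ ζ * d + rhat * (1 - ζ + Real.log (1 + Real.sqrt μ) / |Real.log ε|) :=
  twoScaleEffectiveDimension_le_general Θ hfin F Fsqrt hsqrt μ hev rhat hmax ζ ε hζ1 hε0 hε1
end

section
/- Let Θ ⊆ ℝ^d and let A : Θ → S^d_+(ℝ) be an L-Lipschitz matrix field (with respect to the Frobenius norm). Then for every β > 0, every vector v ∈ ℝ^d, and all θ₁, θ₂ ∈ Θ, one has ‖v‖²_{A_β(θ₂)} ≤ (3 + L β^{−1} |θ₁ − θ₂|) ‖v‖²_{A_β(θ₁)}. -/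
/-!
Diagonalise `A(θ₁)` and `A(θ₂)` as in the definition of `A_β`. Raising the eigenvalues to at
least `β` costs at most `β |v|²`, so `‖v‖²_{A_β(θ₂)} ≤ ‖v‖²_{A(θ₂)} + β |v|²`. The Frobenius
Lipschitz bound and Cauchy–Schwarz give `‖v‖²_{A(θ₂)} ≤ ‖v‖²_{A(θ₁)} + L |θ₁ - θ₂| |v|²`.
Finally `‖v‖²_{A(θ₁)}` and `β |v|²` are both at most `‖v‖²_{A_β(θ₁)}`; the second bound turns
`|v|²` into `β⁻¹ ‖v‖²_{A_β(θ₁)}`.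
-/

open Matrix

section
variable {n ι : Type*} [Fintype n] [Fintype ι]

theorem dotProduct_sum_smul_vecMulVec_mulVec {R : Type*} [CommSemiring R] (c : ι → R)
    (u : ι → n → R) (v : n → R) :
    ((∑ j, c j • vecMulVec (u j) (u j)) *ᵥ v) ⬝ᵥ v = ∑ j, c j * (u j ⬝ᵥ v) ^ 2 := by
  simp only [sum_mulVec, smul_mulVec, vecMulVec_mulVec, sum_dotProduct, smul_dotProduct,
    op_smul_eq_smul, smul_eq_mul, dotProduct_comm (u _) v]
  exact Finset.sum_congr rfl fun j _ => by ring

theorem sum_sq_dotProduct_of_orthonormal [DecidableEq n] {u : n → n → ℝ}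
    (hu : ∀ i j, u i ⬝ᵥ u j = if i = j then 1 else 0) (v : n → ℝ) :
    ∑ j, (u j ⬝ᵥ v) ^ 2 = v ⬝ᵥ v := by
  have hU : of u * (of u)ᵀ = 1 := by
    ext i j
    simpa [mul_apply, dotProduct, one_apply] using hu i j
  calc ∑ j, (u j ⬝ᵥ v) ^ 2 = (of u *ᵥ v) ⬝ᵥ (of u *ᵥ v) := by
        simp [dotProduct, mulVec, sq]
    _ = v ⬝ᵥ v := by
        rw [dotProduct_mulVec, ← mulVec_transpose, mulVec_mulVec, mul_eq_one_comm.mp hU,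
          one_mulVec]

theorem dotProduct_mulVec_le_sqrt_sum_sq_mul (M : Matrix n n ℝ) (v : n → ℝ) :
    (M *ᵥ v) ⬝ᵥ v ≤ √(∑ i, ∑ j, M i j ^ 2) * (v ⬝ᵥ v) := by
  have hpair : (M *ᵥ v) ⬝ᵥ v = ∑ p : n × n, M p.1 p.2 * (v p.1 * v p.2) := by
    simp only [Fintype.sum_prod_type, mulVec, dotProduct, Finset.sum_mul]
    exact Finset.sum_congr rfl fun i _ => Finset.sum_congr rfl fun j _ => by ring
  have hv : √(∑ p : n × n, (v p.1 * v p.2) ^ 2) = v ⬝ᵥ v := by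
    have hsq : ∑ p : n × n, (v p.1 * v p.2) ^ 2 = (v ⬝ᵥ v) ^ 2 := by
      simp only [Fintype.sum_prod_type, dotProduct, sq, Finset.sum_mul_sum]
      exact Finset.sum_congr rfl fun i _ => Finset.sum_congr rfl fun j _ => by ring
    exact hsq ▸ Real.sqrt_sq (show 0 ≤ v ⬝ᵥ v from
      Finset.sum_nonneg fun i _ => mul_self_nonneg (v i))
  rw [hpair, ← hv, ← Fintype.sum_prod_type']
  exact Real.sum_mul_le_sqrt_mul_sqrt _ _ _

theorem dotProduct_mulVec_le_add_sqrt_sum_sq_sub (A B : Matrix n n ℝ) (v : n → ℝ) :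
    (B *ᵥ v) ⬝ᵥ v ≤ (A *ᵥ v) ⬝ᵥ v + √(∑ i, ∑ j, (A i j - B i j) ^ 2) * (v ⬝ᵥ v) := by
  have h := dotProduct_mulVec_le_sqrt_sum_sq_mul (B - A) v
  simp only [sub_mulVec, sub_dotProduct, Matrix.sub_apply, sub_sq_comm (B _ _)] at h
  linarith

theorem dotProduct_sum_smul_vecMulVec_mulVec_le_max (u : ι → n → ℝ) (lam : ι → ℝ) (β : ℝ)
    (v : n → ℝ) :
    ((∑ j, lam j • vecMulVec (u j) (u j)) *ᵥ v) ⬝ᵥ v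
      ≤ ((∑ j, max (lam j) β • vecMulVec (u j) (u j)) *ᵥ v) ⬝ᵥ v := by
  rw [dotProduct_sum_smul_vecMulVec_mulVec, dotProduct_sum_smul_vecMulVec_mulVec]
  exact Finset.sum_le_sum fun j _ => mul_le_mul_of_nonneg_right (le_max_left _ _) (sq_nonneg _)

variable [DecidableEq n] {u : n → n → ℝ} (lam : n → ℝ) {β : ℝ} (v : n → ℝ)

theorem dotProduct_sum_max_smul_vecMulVec_mulVec_le
    (hu : ∀ i j, u i ⬝ᵥ u j = if i = j then 1 else 0) (hlam : ∀ j, 0 ≤ lam j) (hβ : 0 ≤ β) :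
    ((∑ j, max (lam j) β • vecMulVec (u j) (u j)) *ᵥ v) ⬝ᵥ v
      ≤ ((∑ j, lam j • vecMulVec (u j) (u j)) *ᵥ v) ⬝ᵥ v + β * (v ⬝ᵥ v) := by
  rw [dotProduct_sum_smul_vecMulVec_mulVec, dotProduct_sum_smul_vecMulVec_mulVec,
    ← sum_sq_dotProduct_of_orthonormal hu v, Finset.mul_sum, ← Finset.sum_add_distrib]
  refine Finset.sum_le_sum fun j _ => ?_
  rw [← add_mul]
  exact mul_le_mul_of_nonneg_right (max_le (le_add_of_nonneg_right hβ)
    (le_add_of_nonneg_left (hlam j))) (sq_nonneg _)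

theorem mul_dotProduct_le_dotProduct_sum_max_smul_vecMulVec_mulVec
    (hu : ∀ i j, u i ⬝ᵥ u j = if i = j then 1 else 0) :
    β * (v ⬝ᵥ v) ≤ ((∑ j, max (lam j) β • vecMulVec (u j) (u j)) *ᵥ v) ⬝ᵥ v := by
  rw [dotProduct_sum_smul_vecMulVec_mulVec, ← sum_sq_dotProduct_of_orthonormal hu v,
    Finset.mul_sum]
  exact Finset.sum_le_sum fun j _ => mul_le_mul_of_nonneg_right (le_max_right _ _) (sq_nonneg _)

end

/-- **Lemma 2 of the paper.** Let `Θ ⊆ ℝ^d` and let `A : Θ → S^d_+(ℝ)` be an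
`L`-Lipschitz matrix field with respect to the Frobenius norm.  For `β > 0`, `A_β(θ)` is
obtained from a spectral decomposition of `A(θ)` by replacing every eigenvalue smaller than `β`
with `β`.  Then for every `β > 0`, every `v ∈ ℝ^d` and all `θ₁, θ₂ ∈ Θ`,
`‖v‖²_{A_β(θ₂)} ≤ (3 + L β⁻¹ |θ₁ − θ₂|) ‖v‖²_{A_β(θ₁)}`. -/
theorem beta_truncated_quadratic_forms_comparable_of_lipschitz
    {d : ℕ} (Θ : Set (Fin d → ℝ)) (L : ℝ)
    (A : (Fin d → ℝ) → Matrix (Fin d) (Fin d) ℝ)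
    (hLip : ∀ θ₁ ∈ Θ, ∀ θ₂ ∈ Θ,
      Real.sqrt (∑ i, ∑ j, (A θ₁ i j - A θ₂ i j) ^ 2)
        ≤ L * Real.sqrt (∑ i, (θ₁ i - θ₂ i) ^ 2))
    (Aβ : ℝ → (Fin d → ℝ) → Matrix (Fin d) (Fin d) ℝ)
    (hAβ : ∀ β > (0 : ℝ), ∀ θ ∈ Θ, ∃ (u : Fin d → (Fin d → ℝ)) (lam : Fin d → ℝ),
        (∀ i j, u i ⬝ᵥ u j = if i = j then (1 : ℝ) else 0) ∧ (∀ j, 0 ≤ lam j) ∧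
        A θ = ∑ j, lam j • vecMulVec (u j) (u j) ∧
        Aβ β θ = ∑ j, max (lam j) β • vecMulVec (u j) (u j)) :
    ∀ β > (0 : ℝ), ∀ v : Fin d → ℝ, ∀ θ₁ ∈ Θ, ∀ θ₂ ∈ Θ,
      ((Aβ β θ₂).mulVec v) ⬝ᵥ v
        ≤ (3 + L * β⁻¹ * Real.sqrt (∑ i, (θ₁ i - θ₂ i) ^ 2)) * (((Aβ β θ₁).mulVec v) ⬝ᵥ v) := by
  intro β hβ v θ₁ hθ₁ θ₂ hθ₂
  obtain ⟨u, lam, hu, -, hA₁, hAβ₁⟩ := hAβ β hβ θ₁ hθ₁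
  obtain ⟨w, mu, hw, hmu, hA₂, hAβ₂⟩ := hAβ β hβ θ₂ hθ₂
  set s := √(∑ i, (θ₁ i - θ₂ i) ^ 2)
  have hv : 0 ≤ v ⬝ᵥ v := Finset.sum_nonneg fun i _ => mul_self_nonneg (v i)
  have hLs : 0 ≤ L * s := (Real.sqrt_nonneg _).trans (hLip θ₁ hθ₁ θ₂ hθ₂)
  have htrunc₂ : (Aβ β θ₂ *ᵥ v) ⬝ᵥ v ≤ (A θ₂ *ᵥ v) ⬝ᵥ v + β * (v ⬝ᵥ v) := by
    rw [hA₂, hAβ₂]; exact dotProduct_sum_max_smul_vecMulVec_mulVec_le mu v hw hmu hβ.le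
  have hlip : (A θ₂ *ᵥ v) ⬝ᵥ v ≤ (A θ₁ *ᵥ v) ⬝ᵥ v + L * s * (v ⬝ᵥ v) :=
    (dotProduct_mulVec_le_add_sqrt_sum_sq_sub _ _ v).trans
      (add_le_add_right (mul_le_mul_of_nonneg_right (hLip θ₁ hθ₁ θ₂ hθ₂) hv) _)
  have htrunc₁ : (A θ₁ *ᵥ v) ⬝ᵥ v ≤ (Aβ β θ₁ *ᵥ v) ⬝ᵥ v := by
    rw [hA₁, hAβ₁]; exact dotProduct_sum_smul_vecMulVec_mulVec_le_max u lam β v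
  have hfloor : β * (v ⬝ᵥ v) ≤ (Aβ β θ₁ *ᵥ v) ⬝ᵥ v := by
    rw [hAβ₁]; exact mul_dotProduct_le_dotProduct_sum_max_smul_vecMulVec_mulVec lam v hu
  have hv_le : v ⬝ᵥ v ≤ β⁻¹ * (Aβ β θ₁ *ᵥ v) ⬝ᵥ v := (le_inv_mul_iff₀ hβ).mpr hfloor
  calc (Aβ β θ₂ *ᵥ v) ⬝ᵥ v
      ≤ (Aβ β θ₁ *ᵥ v) ⬝ᵥ v + L * s * (v ⬝ᵥ v) + β * (v ⬝ᵥ v) := by linarith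
    _ ≤ (Aβ β θ₁ *ᵥ v) ⬝ᵥ v + L * s * (β⁻¹ * (Aβ β θ₁ *ᵥ v) ⬝ᵥ v) + (Aβ β θ₁ *ᵥ v) ⬝ᵥ v := by
        gcongr
    _ ≤ (3 + L * β⁻¹ * s) * (Aβ β θ₁ *ᵥ v) ⬝ᵥ v := by
        linarith [mul_nonneg hβ.le hv]
end

section
/- Let L ≥ 1, let (Θ_j, μ_j), j = 1, …, L, be probability spaces, and for each j let g_j : Θ_1 × ⋯ × Θ_j → [1, ∞) be measurable with ∫ ∏_{j=1}^m g_j d(μ_1 ⊗ ⋯ ⊗ μ_m) < ∞ for every m ≤ L. For m = 2, …, L let P_m be the probability measure on Θ_1 × ⋯ × Θ_{m−1} whose density with respect to μ_1 ⊗ ⋯ ⊗ μ_{m−1} is ∏_{j=1}^{m−1} g_j divided by ∫ ∏_{j=1}^{m−1} g_j d(μ_1 ⊗ ⋯ ⊗ μ_{m−1}). Then log ∫ ∏_{j=1}^L g_j d(μ_1 ⊗ ⋯ ⊗ μ_L) ≥ log ∫ g_1 dμ_1 + Σ_{m=2}^L ∫ ( ∫ log g_m dμ_m ) dP_m. Consequently,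 taking g_j(θ_1,…,θ_j) = det(I_{d_j} + ε^{ζ−1} F_j(θ_1,…,θ_j)^{1/2}) for positive semidefinite blocks F_j of the Fisher matrix of a Markovian model and μ_j the normalized Lebesgue measure on Θ_j, the lower two-scale effective dimension defined by this iterative scheme is a lower bound for the two-scale effective dimension: d̲_ζ(ε) ≤ d_ζ(ε). -/
open MeasureTheory

/-!
Write `P_m = ∏_{j<m} g_j` and `S_m = ∫ P_m`. Jensen's inequality for the concave logarithm under
the probability density `P_m / S_m` gives `∫ log g_m · P_m / S_m ≤ log (S_{m+1} / S_m)`, and the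
right-hand sides telescope to `log S_L - log S_1`. The bound on the effective dimensions is this
inequality divided by `|log ε|`.
-/

section Jensen

variable {α : Type*} [MeasurableSpace α] {μ : Measure α}

theorem integral_log_mul_le_log_integral_mul {f w : α → ℝ} (hf : AEMeasurable f μ)
    (hf1 : ∀ x, 1 ≤ f x) (hw0 : ∀ x, 0 ≤ w x) (hw1 : ∫ x, w x ∂μ = 1)
    (hfw : Integrable (fun x => f x * w x) μ) :
    ∫ x, Real.log (f x) * w x ∂μ ≤ Real.log (∫ x, f x * w x ∂μ) := by
  have hw : Integrable w μ := .of_integral_ne_zero (by simp [hw1])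
  set c := ∫ x, f x * w x ∂μ
  have hc : 0 < c := by
    refine zero_lt_one.trans_le (hw1 ▸ integral_mono hw hfw fun x => ?_)
    exact le_mul_of_one_le_left (hw0 x) (hf1 x)
  have hlogf : Integrable (fun x => Real.log (f x) * w x) μ := by
    refine hfw.mono (hf.log.aestronglyMeasurable.mul hw.aestronglyMeasurable) <|
      .of_forall fun x => ?_
    have hlog := Real.log_nonneg (hf1 x)
    rw [Real.norm_of_nonneg (mul_nonneg hlog (hw0 x)),
      Real.norm_of_nonneg (mul_nonneg (zero_le_one.trans (hf1 x)) (hw0 x))]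
    exact mul_le_mul_of_nonneg_right
      ((Real.log_le_sub_one_of_pos (zero_lt_one.trans_le (hf1 x))).trans (by linarith)) (hw0 x)
  -- the tangent line of `log` at `c`
  have htangent : ∀ x, Real.log (f x) * w x ≤ (Real.log c - 1) * w x + f x * w x / c := by
    intro x
    have hfx : 0 < f x := zero_lt_one.trans_le (hf1 x)
    have h := Real.log_le_sub_one_of_pos (div_pos hfx hc)
    rw [Real.log_div hfx.ne' hc.ne'] at h
    nlinarith [hw0 x, mul_div_assoc (f x) (w x) c, div_mul_eq_mul_div (f x) c (w x)]
  calc ∫ x, Real.log (f x) * w x ∂μ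
      ≤ ∫ x, ((Real.log c - 1) * w x + f x * w x / c) ∂μ :=
        integral_mono hlogf ((hw.const_mul _).add (hfw.div_const c)) htangent
    _ = Real.log c := by
        rw [integral_add (hw.const_mul _) (hfw.div_const c), integral_const_mul, integral_div, hw1,
          div_self hc.ne']
        ring

theorem integral_log_mul_div_integral_le {f p : α → ℝ} (hf : AEMeasurable f μ)
    (hf1 : ∀ x, 1 ≤ f x) (hp0 : ∀ x, 0 ≤ p x) (hp : 0 < ∫ x, p x ∂μ)
    (hfp : Integrable (fun x => f x * p x) μ) :
    ∫ x, Real.log (f x) * (p x / ∫ y, p y ∂μ) ∂μ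
      ≤ Real.log (∫ x, f x * p x ∂μ) - Real.log (∫ x, p x ∂μ) := by
  have hfp_pos : 0 < ∫ x, f x * p x ∂μ :=
    hp.trans_le <| integral_mono (.of_integral_ne_zero hp.ne') hfp fun x =>
      le_mul_of_one_le_left (hp0 x) (hf1 x)
  have h := integral_log_mul_le_log_integral_mul (w := fun x => p x / ∫ y, p y ∂μ) hf hf1
    (fun x => div_nonneg (hp0 x) hp.le) (by rw [integral_div, div_self hp.ne'])
    (by simpa only [mul_div_assoc] using hfp.div_const (∫ y, p y ∂μ))
  simpa only [← mul_div_assoc, integral_div, Real.log_div hfp_pos.ne' hp.ne'] using h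

end Jensen

section PartialProd

variable {α : Type*} {L : ℕ}

def partialProd (g : Fin L → α → ℝ) (m : ℕ) (x : α) : ℝ :=
  ∏ j ∈ Finset.univ.filter (fun j : Fin L => (j : ℕ) < m), g j x

variable (g : Fin L → α → ℝ)

theorem partialProd_zero : partialProd g 0 = 1 := by
  ext x
  simp [partialProd]

theorem partialProd_one (hL : 1 ≤ L) : partialProd g 1 = g ⟨0, hL⟩ := by
  ext x
  have : Finset.univ.filter (fun j : Fin L => (j : ℕ) < 1) = {⟨0, hL⟩} := by
    ext j
    simp [Fin.ext_iff]
  rw [partialProd, this, Finset.prod_singleton]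

theorem partialProd_length : partialProd g L = fun x => ∏ j, g j x := by
  ext x
  rw [partialProd, Finset.filter_true_of_mem fun j _ => j.isLt]

theorem partialProd_succ_eq_prod_le (m : Fin L) :
    partialProd g (m + 1) = fun x => ∏ j ∈ Finset.univ.filter (fun j => j ≤ m), g j x := by
  ext x
  simp only [partialProd, Nat.lt_succ_iff, Fin.val_fin_le]

theorem partialProd_succ (m : Fin L) :
    partialProd g (m + 1) = fun x => g m x * partialProd g m x := by
  have : Finset.univ.filter (fun j : Fin L => (j : ℕ) < m + 1)
      = insert m (Finset.univ.filter (fun j : Fin L => (j : ℕ) < m)) := by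
    ext j
    simp only [Finset.mem_filter, Finset.mem_univ, true_and, Finset.mem_insert, Fin.ext_iff]
    omega
  ext x
  rw [partialProd, this, Finset.prod_insert (by simp)]
  rfl

variable {g}

theorem one_le_partialProd (hg : ∀ j x, 1 ≤ g j x) (m : ℕ) (x : α) : 1 ≤ partialProd g m x :=
  Finset.one_le_prod fun j _ => hg j x

end PartialProd

theorem Fin.sum_filter_pos_sub {M : Type*} [AddCommGroup M] {n : ℕ} (hn : 1 ≤ n)
    (φ : ℕ → M) :
    ∑ m ∈ Finset.univ.filter (fun m : Fin n => 0 < (m : ℕ)), (φ (m + 1) - φ m) = φ n - φ 1 := by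
  obtain ⟨k, rfl⟩ := Nat.exists_eq_add_of_le' hn
  rw [Finset.sum_filter, Fin.sum_univ_succ]
  simp only [Fin.val_zero, lt_irrefl, if_false, Fin.val_succ, Nat.succ_pos, if_true, zero_add]
  rw [Fin.sum_univ_eq_sum_range (fun i => φ (i + 1 + 1) - φ (i + 1)),
    Finset.sum_range_sub (fun i => φ (i + 1))]

theorem log_integral_prod_ge {α : Type*} [MeasurableSpace α] (μ : Measure α)
    [IsProbabilityMeasure μ] {L : ℕ} (hL : 1 ≤ L) (g : Fin L → α → ℝ)
    (hmeas : ∀ j, Measurable (g j)) (hge1 : ∀ j x, 1 ≤ g j x)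
    (hint : ∀ m : Fin L, Integrable (partialProd g (m + 1)) μ) :
    Real.log (∫ x, partialProd g L x ∂μ)
      ≥ Real.log (∫ x, partialProd g 1 x ∂μ)
        + ∑ m ∈ Finset.univ.filter (fun m : Fin L => 0 < (m : ℕ)),
            ∫ x, Real.log (g m x) * (partialProd g m x / ∫ y, partialProd g m y ∂μ) ∂μ := by
  have hint_partialProd : ∀ m : Fin L, Integrable (partialProd g m) μ := by
    rintro ⟨_ | k, hk⟩
    · rw [partialProd_zero]
      exact integrable_const 1
    · exact hint ⟨k, by omega⟩
  have step : ∀ m : Fin L,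
      ∫ x, Real.log (g m x) * (partialProd g m x / ∫ y, partialProd g m y ∂μ) ∂μ
        ≤ Real.log (∫ x, partialProd g (m + 1) x ∂μ)
          - Real.log (∫ x, partialProd g m x ∂μ) := by
    intro m
    have hpos : 0 < ∫ x, partialProd g m x ∂μ := by
      refine zero_lt_one.trans_le ?_
      simpa using
        integral_mono (integrable_const 1) (hint_partialProd m) (one_le_partialProd hge1 m)
    have hsucc := hint m
    rw [partialProd_succ] at hsucc ⊢
    exact integral_log_mul_div_integral_le (hmeas m).aemeasurable (hge1 m)
      (fun x => zero_le_one.trans (one_le_partialProd hge1 m x)) hpos hsucc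
  rw [ge_iff_le, ← le_sub_iff_add_le']
  exact (Finset.sum_le_sum fun m _ => step m).trans_eq
    (Fin.sum_filter_pos_sub hL fun m => Real.log (∫ x, partialProd g m x ∂μ))

theorem lower_2sED_le_2sED_general
    {L : ℕ} (hL : 1 ≤ L)
    (Ω : Fin L → Type*) [∀ j, MeasurableSpace (Ω j)]
    (μ : ∀ j, Measure (Ω j)) [∀ j, IsProbabilityMeasure (μ j)]
    (g : Fin L → (∀ j, Ω j) → ℝ)
    (hmeas : ∀ j, Measurable (g j))
    (hge1 : ∀ j x, 1 ≤ g j x)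
    (hint : ∀ m : Fin L,
      Integrable (fun x => ∏ j ∈ Finset.univ.filter (fun j : Fin L => j ≤ m), g j x)
        (Measure.pi μ))
    (ζ ε : ℝ)
    (dd : Fin L → ℕ) :
    Real.log (∫ x, ∏ j, g j x ∂(Measure.pi μ))
      ≥ Real.log (∫ x, g ⟨0, hL⟩ x ∂(Measure.pi μ))
        + ∑ m ∈ Finset.univ.filter (fun m : Fin L => 0 < (m : ℕ)),
            ∫ x, Real.log (g m x) *
              ((∏ j ∈ Finset.univ.filter (fun j : Fin L => (j : ℕ) < (m : ℕ)), g j x) /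
                ∫ y, ∏ j ∈ Finset.univ.filter (fun j : Fin L => (j : ℕ) < (m : ℕ)), g j y
                  ∂(Measure.pi μ)) ∂(Measure.pi μ)
    ∧
    ζ * (∑ j, (dd j : ℝ)) +
        (Real.log (∫ x, g ⟨0, hL⟩ x ∂(Measure.pi μ))
          + ∑ m ∈ Finset.univ.filter (fun m : Fin L => 0 < (m : ℕ)),
              ∫ x, Real.log (g m x) *
                ((∏ j ∈ Finset.univ.filter (fun j : Fin L => (j : ℕ) < (m : ℕ)), g j x) /
                  ∫ y, ∏ j ∈ Finset.univ.filter (fun j : Fin L => (j : ℕ) < (m : ℕ)), g j y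
                    ∂(Measure.pi μ)) ∂(Measure.pi μ)) / |Real.log ε|
      ≤ ζ * (∑ j, (dd j : ℝ)) +
          Real.log (∫ x, ∏ j, g j x ∂(Measure.pi μ)) / |Real.log ε| := by
  have h := log_integral_prod_ge (Measure.pi μ) hL g hmeas hge1 fun m => by
    rw [partialProd_succ_eq_prod_le]
    exact hint m
  rw [partialProd_length, partialProd_one] at h
  refine ⟨h, ?_⟩
  gcongr
  exact h

/-- **iterated Jensen inequality and the lower 2sED.**
Let `(Θ_j, μ_j)`, `j = 1, …, L`, be probability spaces and for each `j` let
`g_j : Θ_1 × ⋯ × Θ_j → [1, ∞)` be measurable (realized as a function on the full product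
depending only on the first `j` coordinates), with `∫ ∏_{j≤m} g_j` finite for every `m ≤ L`.
Then
`log ∫ ∏_{j=1}^L g_j ≥ log ∫ g_1 + Σ_{m=2}^L ∫ log g_m dP_m ⊗ μ_m ⊗ ⋯`,
where `P_m` has density `∏_{j<m} g_j / ∫ ∏_{j<m} g_j` with respect to the product measure.
Consequently, taking `g_j = det(I_{d_j} + ε^{ζ−1} F_j^{1/2})` for positive semidefinite blocks
`F_j` of the Fisher matrix of a Markovian model, the lower two-scale effective dimension is a
lower bound for the two-scale effective dimension: `d̲_ζ(ε) ≤ d_ζ(ε)`. -/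
theorem lower_2sED_le_2sED
    {L : ℕ} (hL : 1 ≤ L)
    (Ω : Fin L → Type*) [∀ j, MeasurableSpace (Ω j)]
    (μ : ∀ j, Measure (Ω j)) [∀ j, IsProbabilityMeasure (μ j)]
    (g : Fin L → (∀ j, Ω j) → ℝ)
    (hdep : ∀ j : Fin L, ∀ x y : ∀ i, Ω i, (∀ i : Fin L, i ≤ j → x i = y i) → g j x = g j y)
    (hmeas : ∀ j, Measurable (g j))
    (hge1 : ∀ j x, 1 ≤ g j x)
    (hint : ∀ m : Fin L,
      Integrable (fun x => ∏ j ∈ Finset.univ.filter (fun j : Fin L => j ≤ m), g j x)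
        (Measure.pi μ))
    (ζ ε : ℝ) (hζ0 : 0 ≤ ζ) (hζ1 : ζ < 1) (hε0 : 0 < ε) (hε1 : ε < 1)
    (dd : Fin L → ℕ)
    (Fsqrt : (j : Fin L) → (∀ i, Ω i) → Matrix (Fin (dd j)) (Fin (dd j)) ℝ)
    (hFpsd : ∀ j x, (Fsqrt j x).PosSemidef)
    (hgdet : ∀ j x,
      g j x = ((1 : Matrix (Fin (dd j)) (Fin (dd j)) ℝ) + ε ^ (ζ - 1) • Fsqrt j x).det) :
    Real.log (∫ x, ∏ j, g j x ∂(Measure.pi μ))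
      ≥ Real.log (∫ x, g ⟨0, hL⟩ x ∂(Measure.pi μ))
        + ∑ m ∈ Finset.univ.filter (fun m : Fin L => 0 < (m : ℕ)),
            ∫ x, Real.log (g m x) *
              ((∏ j ∈ Finset.univ.filter (fun j : Fin L => (j : ℕ) < (m : ℕ)), g j x) /
                ∫ y, ∏ j ∈ Finset.univ.filter (fun j : Fin L => (j : ℕ) < (m : ℕ)), g j y
                  ∂(Measure.pi μ)) ∂(Measure.pi μ)
    ∧
    ζ * (∑ j, (dd j : ℝ)) +
        (Real.log (∫ x, g ⟨0, hL⟩ x ∂(Measure.pi μ))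
          + ∑ m ∈ Finset.univ.filter (fun m : Fin L => 0 < (m : ℕ)),
              ∫ x, Real.log (g m x) *
                ((∏ j ∈ Finset.univ.filter (fun j : Fin L => (j : ℕ) < (m : ℕ)), g j x) /
                  ∫ y, ∏ j ∈ Finset.univ.filter (fun j : Fin L => (j : ℕ) < (m : ℕ)), g j y
                    ∂(Measure.pi μ)) ∂(Measure.pi μ)) / |Real.log ε|
      ≤ ζ * (∑ j, (dd j : ℝ)) +
          Real.log (∫ x, ∏ j, g j x ∂(Measure.pi μ)) / |Real.log ε| :=
  lower_2sED_le_2sED_general hL Ω μ g hmeas hge1 hint ζ ε dd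
end
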